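/- arXiv:2603.07763 — 6 statements merged into one kernel-verified Lean document; each statement's English description precedes it below -/
import Mathlib

section
/- Let X, U be real Hilbert spaces, F ⊆ U a nonempty closed convex set, B : U → X a bounded linear operator with adjoint B* : X → U, D ⊆ X, and M : D → X monotone, i.e., ⟨M(x) − M(z), x − z⟩ ≥ 0 for all x, z ∈ D. Fix x* ∈ D and u* ∈ U, and define the closed-loop operator M_cl : D → X by M_cl(x) = M(x) − B(P_F(u* − B*(x − x*))). Then M_cl is monotone on D: ⟨M_cl(x) − M_cl(z), x − z⟩ ≥ 0 for all x, z ∈ D. -/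
open RealInnerProductSpace

/-- The closed-loop operator `M_cl x = M x - B (P_F (u* - B* (x - x*)))` is
monotone on `D` whenever `M` is monotone on `D`. -/
theorem closed_loop_operator_monotone
    {X U : Type*} [NormedAddCommGroup X] [InnerProductSpace ℝ X] [CompleteSpace X]
    [NormedAddCommGroup U] [InnerProductSpace ℝ U] [CompleteSpace U]
    (F : Set U) (hne : F.Nonempty) (hcl : IsClosed F) (hconv : Convex ℝ F)
    (P : U → U)
    (hPmem : ∀ w, P w ∈ F)
    (hPchar : ∀ w, ∀ z ∈ F, ⟪w - P w, z - P w⟫ ≤ 0)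
    (B : U →L[ℝ] X) (D : Set X) (M : X → X)
    (hmono : ∀ x ∈ D, ∀ z ∈ D, ⟪M x - M z, x - z⟫ ≥ 0)
    (xs : X) (hxs : xs ∈ D) (us : U)
    (Mcl : X → X)
    (hMcl : ∀ x, Mcl x = M x - B (P (us - (ContinuousLinearMap.adjoint B) (x - xs)))) :
    ∀ x ∈ D, ∀ z ∈ D, ⟪Mcl x - Mcl z, x - z⟫ ≥ 0 := by
  intro x hx z hz
  set A := ContinuousLinearMap.adjoint B with hA
  set wx := us - A (x - xs) with hwx
  set wz := us - A (z - xs) with hwz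
  have h1 := hPchar wx (P wz) (hPmem wz)
  have h2 := hPchar wz (P wx) (hPmem wx)
  have hM := hmono x hx z hz
  -- monotonicity of the projection
  have key : ⟪P wx - P wz, wx - wz⟫ ≥ 0 := by
    have hsum : ⟪P wx - P wz, wx - wz⟫ =
        ‖P wx - P wz‖ ^ 2 - ⟪wx - P wx, P wz - P wx⟫ - ⟪wz - P wz, P wx - P wz⟫ := by
      simp only [@real_inner_sub_sub_self, inner_sub_left, inner_sub_right,
        real_inner_self_eq_norm_sq]
      ring_nf
      rw [@norm_sub_sq_real, real_inner_comm (P wz) (P wx)]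
      ring_nf
      rw [real_inner_comm (P wx) wx, real_inner_comm (P wz) wx,
        real_inner_comm (P wx) wz, real_inner_comm (P wz) wz]
      ring
    have : (0:ℝ) ≤ ‖P wx - P wz‖ ^ 2 := sq_nonneg _
    linarith [hsum, h1, h2]
  -- rewrite wx - wz
  have hw : wx - wz = -(A (x - z)) := by
    rw [hwx, hwz]
    have : A (x - xs) - A (z - xs) = A (x - z) := by
      rw [← map_sub]; congr 1; abel
    rw [sub_sub_sub_cancel_left]
    rw [show A (z - xs) - A (x - xs) = -(A (x - xs) - A (z - xs)) by abel, this]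
  have hadj : ⟪B (P wx) - B (P wz), x - z⟫ = ⟪P wx - P wz, A (x - z)⟫ := by
    rw [← map_sub, hA, ContinuousLinearMap.adjoint_inner_right]
  have hBle : ⟪B (P wx) - B (P wz), x - z⟫ ≤ 0 := by
    rw [hadj]
    have : ⟪P wx - P wz, A (x - z)⟫ = -⟪P wx - P wz, wx - wz⟫ := by
      rw [hw, inner_neg_right, neg_neg]
    linarith [this, key]
  have hexp : ⟪Mcl x - Mcl z, x - z⟫ =
      ⟪M x - M z, x - z⟫ - ⟪B (P wx) - B (P wz), x - z⟫ := by
    rw [hMcl x, hMcl z]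
    simp only [inner_sub_left, ← hwx, ← hwz, ← hA]
    ring
  linarith [hexp, hM, hBle]
end

section
/- Let X, U be real Hilbert spaces, F ⊆ U a nonempty closed convex set, B : U → X a bounded linear operator with adjoint B*, D ⊆ X, M : D → X monotone, and (x*, u*) ∈ D × (interior of F) a controlled equilibrium, i.e., M(x*) = B(u*). If x ∈ D satisfies M_cl(x) = 0, where M_cl(x) = M(x) − B(P_F(u* − B*(x − x*))), then B*(x − x*) = 0; that is, every zero of M_cl lies in x* + ker B*. -/
open RealInnerProductSpace

/-- Every zero of the closed-loop operator `M_cl` lies in `x* + ker B*`. -/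
theorem zero_of_closed_loop_in_kernel
    {X U : Type*} [NormedAddCommGroup X] [InnerProductSpace ℝ X] [CompleteSpace X]
    [NormedAddCommGroup U] [InnerProductSpace ℝ U] [CompleteSpace U]
    (F : Set U) (hne : F.Nonempty) (hcl : IsClosed F) (hconv : Convex ℝ F)
    (P : U → U)
    (hPmem : ∀ w, P w ∈ F)
    (hPchar : ∀ w, ∀ z ∈ F, ⟪w - P w, z - P w⟫ ≤ 0)
    (B : U →L[ℝ] X) (D : Set X) (M : X → X)
    (hmono : ∀ x ∈ D, ∀ z ∈ D, ⟪M x - M z, x - z⟫ ≥ 0)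
    (xs : X) (hxs : xs ∈ D) (us : U) (hus : us ∈ interior F)
    (heq : M xs = B us)
    (x : X) (hx : x ∈ D)
    (hzero : M x - B (P (us - (ContinuousLinearMap.adjoint B) (x - xs))) = 0) :
    (ContinuousLinearMap.adjoint B) (x - xs) = 0 := by
  set v := (ContinuousLinearMap.adjoint B) (x - xs) with hv
  set w := us - v with hw
  set p := P w with hp
  have hMx : M x = B p := by
    have := sub_eq_zero.mp hzero
    simpa [hp, hw] using this
  -- monotonicity gives ⟪p - us, v⟫ ≥ 0
  have hmono' : (0:ℝ) ≤ ⟪p - us, v⟫ := by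
    have h := hmono x hx xs hxs
    rw [hMx, heq, ← map_sub] at h
    rw [hv, ContinuousLinearMap.adjoint_inner_right]
    exact h
  -- projection characterization with z = us gives p = us
  have husF : us ∈ F := interior_subset hus
  have hchar := hPchar w us husF
  have hpus : p = us := by
    have hwp : w - p = (us - p) - v := by rw [hw]; abel
    rw [hwp] at hchar
    rw [inner_sub_left] at hchar
    have h1 : ⟪v, us - p⟫ = - ⟪p - us, v⟫ := by
      rw [← inner_neg_left, show -(p - us) = us - p by abel, real_inner_comm]
    have h2 : ⟪us - p, us - p⟫ ≤ 0 := by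
      have : ⟪v, us - p⟫ ≤ 0 := by rw [h1]; linarith
      linarith
    have h3 : us - p = 0 := by
      have := real_inner_self_nonneg (x := us - p)
      have h4 : ⟪us - p, us - p⟫ = 0 := le_antisymm h2 this
      exact inner_self_eq_zero.mp h4
    have : p = us := by
      have := sub_eq_zero.mp h3
      exact this.symm
    exact this
  -- now ⟪v, z - us⟫ ≥ 0 for all z ∈ F
  have hkey : ∀ z ∈ F, (0:ℝ) ≤ ⟪v, z - us⟫ := by
    intro z hz
    have h := hPchar w z hz
    rw [← hp, hpus] at h
    have hwu : w - us = -v := by rw [hw]; abel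
    rw [hwu, inner_neg_left] at h
    linarith
  -- interiority: us - c • v ∈ F for small c
  obtain ⟨ε, hε, hball⟩ := Metric.mem_nhds_iff.mp (mem_interior_iff_mem_nhds.mp hus)
  set c : ℝ := ε / (2 * (‖v‖ + 1)) with hc
  have hvpos : (0:ℝ) < ‖v‖ + 1 := by positivity
  have hcpos : 0 < c := by positivity
  have hz : us - c • v ∈ F := by
    apply hball
    rw [Metric.mem_ball, dist_eq_norm]
    have : us - c • v - us = -(c • v) := by abel
    rw [this, norm_neg, norm_smul, Real.norm_eq_abs, abs_of_pos hcpos]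
    calc c * ‖v‖ < c * (‖v‖ + 1) := by
            exact mul_lt_mul_of_pos_left (by linarith) hcpos
      _ = ε / 2 := by
        field_simp [hc]
        have h := div_mul_cancel₀ ε (ne_of_gt (by positivity : (0:ℝ) < 2 * (‖v‖ + 1)))
        rw [← hc] at h
        linear_combination h
      _ < ε := by linarith
  have := hkey _ hz
  have hsimp : (us - c • v) - us = -(c • v) := by abel
  rw [hsimp, inner_neg_right, inner_smul_right, real_inner_self_eq_norm_sq] at this
  have hnv : ‖v‖ ^ 2 ≤ 0 := by nlinarith
  have : ‖v‖ = 0 := by nlinarith [norm_nonneg v]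
  exact norm_eq_zero.mp this
end

section
/- Let X, U be real Hilbert spaces, F ⊆ U a nonempty closed convex set, B : U → X a bounded linear operator with adjoint B*, D ⊆ X, M : D → X monotone, and (x*, u*) ∈ D × (interior of F) a controlled equilibrium, i.e., M(x*) = B(u*). Define M_cl(x) = M(x) − B(P_F(u* − B*(x − x*))). Then for all x, z ∈ D with B*(z − x*) = 0 it holds that ⟨M_cl(x) − M_cl(z), x − z⟩ ≥ ‖P_F(u* − B*(x − x*)) − u*‖². -/
open RealInnerProductSpace

/-- Quantitative monotonicity estimate for the closed-loop operator against
points `z` with `B*(z - x*) = 0`. -/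
theorem closed_loop_quantitative_monotone
    {X U : Type*} [NormedAddCommGroup X] [InnerProductSpace ℝ X] [CompleteSpace X]
    [NormedAddCommGroup U] [InnerProductSpace ℝ U] [CompleteSpace U]
    (F : Set U) (hne : F.Nonempty) (hcl : IsClosed F) (hconv : Convex ℝ F)
    (P : U → U)
    (hPmem : ∀ w, P w ∈ F)
    (hPchar : ∀ w, ∀ z ∈ F, ⟪w - P w, z - P w⟫ ≤ 0)
    (B : U →L[ℝ] X) (D : Set X) (M : X → X)
    (hmono : ∀ x ∈ D, ∀ z ∈ D, ⟪M x - M z, x - z⟫ ≥ 0)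
    (xs : X) (hxs : xs ∈ D) (us : U) (hus : us ∈ interior F)
    (heq : M xs = B us)
    (Mcl : X → X)
    (hMcl : ∀ x, Mcl x = M x - B (P (us - (ContinuousLinearMap.adjoint B) (x - xs)))) :
    ∀ x ∈ D, ∀ z ∈ D, (ContinuousLinearMap.adjoint B) (z - xs) = 0 →
      ⟪Mcl x - Mcl z, x - z⟫ ≥
        ‖P (us - (ContinuousLinearMap.adjoint B) (x - xs)) - us‖ ^ 2 := by
  intro x hx z hz hBz
  have husF : us ∈ F := interior_subset hus
  -- P us = us
  have hPus : P us = us := by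
    have h := hPchar us us husF
    have h2 : (0:ℝ) ≤ ⟪us - P us, us - P us⟫ := real_inner_self_nonneg
    have h3 : ⟪us - P us, us - P us⟫ = 0 := le_antisymm h h2
    have h4 : us - P us = 0 := by
      have := inner_self_eq_zero (𝕜 := ℝ) (x := us - P us)
      exact this.mp h3
    have := sub_eq_zero.mp h4
    exact this.symm
  set w := us - (ContinuousLinearMap.adjoint B) (x - xs) with hw
  set p := P w with hp
  have hdiff : Mcl x - Mcl z = (M x - M z) - B (p - us) := by
    rw [hMcl, hMcl, hBz, sub_zero, hPus, ← hw, ← hp, map_sub]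
    abel
  have hadj : (ContinuousLinearMap.adjoint B) (x - z) = us - w := by
    have : x - z = (x - xs) - (z - xs) := by abel
    rw [this, map_sub, hBz, sub_zero, hw]
    abel
  have hinner : ⟪B (p - us), x - z⟫ = ⟪p - us, us - w⟫ := by
    rw [← ContinuousLinearMap.adjoint_inner_right, hadj]
  have hproj : ⟪w - p, us - p⟫ ≤ 0 := hPchar w us husF
  have hsplit : ⟪p - us, us - w⟫ = ⟪p - us, p - w⟫ - ‖p - us‖ ^ 2 := by
    have : us - w = (p - w) - (p - us) := by abel
    rw [this, inner_sub_right, real_inner_self_eq_norm_sq]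
  have hsign : ⟪p - us, p - w⟫ ≤ 0 := by
    have : ⟪p - us, p - w⟫ = ⟪w - p, us - p⟫ := by
      rw [real_inner_comm]
      have h1 : p - us = -(us - p) := by abel
      have h2 : p - w = -(w - p) := by abel
      rw [h1, h2, inner_neg_neg]
    linarith [hproj, this ▸ hproj]
  have hmx := hmono x hx z hz
  have : ⟪Mcl x - Mcl z, x - z⟫ =
      ⟪M x - M z, x - z⟫ - ⟪B (p - us), x - z⟫ := by
    rw [hdiff, inner_sub_left]
  rw [this, hinner, hsplit]
  linarith
end

section
/- Let X = ℝ² with the Euclidean inner product, x* ∈ X, ε > 0, and let J : ℝ² → ℝ² be the linear map J(z₁, z₂) = (z₂, −z₁). Define M : ℝ² → ℝ² by M(x) = (ε / √(1 + ‖x − x*‖²))·(x − x*) + J(x − x*). Then M is monotone: ⟨M(x) − M(z), x − z⟩ ≥ 0 for all x, z ∈ ℝ². -/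
open RealInnerProductSpace

/-- The rotation `J(z₁, z₂) = (z₂, -z₁)` on `ℝ²`. -/
noncomputable def Jrot (z : EuclideanSpace ℝ (Fin 2)) : EuclideanSpace ℝ (Fin 2) :=
  (WithLp.equiv 2 (Fin 2 → ℝ)).symm ![z 1, -(z 0)]

lemma key_ineq (ε : ℝ) (hε : 0 < ε) (a b ip : ℝ) (ha : 0 ≤ a) (hb : 0 ≤ b)
    (hip : ip ≤ a * b) :
    (ε / Real.sqrt (1 + a ^ 2)) * a ^ 2 + (ε / Real.sqrt (1 + b ^ 2)) * b ^ 2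
      - (ε / Real.sqrt (1 + a ^ 2) + ε / Real.sqrt (1 + b ^ 2)) * ip ≥ 0 := by
  set s := Real.sqrt (1 + a ^ 2) with hs
  set t := Real.sqrt (1 + b ^ 2) with ht
  have hs0 : 0 < s := Real.sqrt_pos.mpr (by positivity)
  have ht0 : 0 < t := Real.sqrt_pos.mpr (by positivity)
  have hs2 : s ^ 2 = 1 + a ^ 2 := Real.sq_sqrt (by positivity)
  have ht2 : t ^ 2 = 1 + b ^ 2 := Real.sq_sqrt (by positivity)
  have habs : (a - b) * (t * a - s * b) ≥ 0 := by
    rcases le_total a b with h | h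
    · have hsq : (t * a) ^ 2 ≤ (s * b) ^ 2 := by nlinarith
      have h2 : t * a ≤ s * b := by
        nlinarith [mul_nonneg ht0.le ha, mul_nonneg hs0.le hb]
      nlinarith
    · have hsq : (s * b) ^ 2 ≤ (t * a) ^ 2 := by nlinarith
      have h2 : s * b ≤ t * a := by
        nlinarith [mul_nonneg ht0.le ha, mul_nonneg hs0.le hb]
      nlinarith
  have hmono : (ε / s + ε / t) * ip ≤ (ε / s + ε / t) * (a * b) := by
    apply mul_le_mul_of_nonneg_left hip
    positivity
  have hmain : ε / s * a ^ 2 + ε / t * b ^ 2 - (ε / s + ε / t) * (a * b) ≥ 0 := by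
    have heq : ε / s * a ^ 2 + ε / t * b ^ 2 - (ε / s + ε / t) * (a * b)
        = (ε * ((a - b) * (t * a - s * b))) / (s * t) := by
      field_simp
      ring
    rw [heq]
    exact div_nonneg (mul_nonneg hε.le habs) (mul_pos hs0 ht0).le
  linarith

/-- The operator `M(x) = (ε/√(1+‖x-x*‖²))(x - x*) + J(x - x*)` on `ℝ²` is
monotone. -/
theorem fin_dim_operator_monotone
    (xs : EuclideanSpace ℝ (Fin 2)) (ε : ℝ) (hε : 0 < ε)
    (M : EuclideanSpace ℝ (Fin 2) → EuclideanSpace ℝ (Fin 2))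
    (hM : ∀ x, M x = (ε / Real.sqrt (1 + ‖x - xs‖ ^ 2)) • (x - xs) + Jrot (x - xs)) :
    ∀ x z : EuclideanSpace ℝ (Fin 2), ⟪M x - M z, x - z⟫ ≥ 0 := by
  intro x z
  rw [hM x, hM z]
  set u := x - xs with hu
  set v := z - xs with hv
  have hxz : x - z = u - v := by rw [hu, hv]; abel
  rw [hxz]
  set c := ε / Real.sqrt (1 + ‖u‖ ^ 2) with hc
  set d := ε / Real.sqrt (1 + ‖v‖ ^ 2) with hd
  have hsplit : (c • u + Jrot u) - (d • v + Jrot v)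
      = (c • u - d • v) + (Jrot u - Jrot v) := by abel
  rw [hsplit, inner_add_left]
  have hskew : ⟪Jrot u - Jrot v, u - v⟫ = 0 := by
    simp only [Jrot, PiLp.inner_apply, RCLike.inner_apply, conj_trivial,
      Fin.sum_univ_two, PiLp.sub_apply, WithLp.equiv_symm_apply, WithLp.ofLp_toLp,
      Matrix.cons_val_zero, Matrix.cons_val_one, Matrix.head_cons]
    ring
  rw [hskew, add_zero]
  have hexp : ⟪c • u - d • v, u - v⟫
      = c * ‖u‖ ^ 2 + d * ‖v‖ ^ 2 - (c + d) * ⟪u, v⟫ := by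
    simp only [inner_sub_left, inner_sub_right, real_inner_smul_left,
      real_inner_self_eq_norm_sq, real_inner_comm v u]
    ring
  rw [hexp, hc, hd]
  exact key_ineq ε hε ‖u‖ ‖v‖ ⟪u, v⟫ (norm_nonneg u) (norm_nonneg v)
    (real_inner_le_norm u v)
end

section
/- Let X = ℝ², x* ∈ X, ε > 0, a < 0 < b, J(z₁, z₂) = (z₂, −z₁), M(x) = (ε / √(1 + ‖x − x*‖²))·(x − x*) + J(x − x*), and let P_{[a,b]}(s) = max(a, min(b, s)). Define the closed-loop vector field G(x) = −M(x) + (P_{[a,b]}(−(x₁ − x₁*)), 0). Then for every x ∈ ℝ², ⟨x − x*, G(x)⟩ ≤ 0, with equality if and only if x = x*; i.e., V(x) = ½‖x − x*‖² is a strict Lyapunov function for the closed-loop system. -/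
open RealInnerProductSpace

/-- `V(x) = ½‖x - x*‖²` is a strict Lyapunov function for the saturated
closed-loop system: `⟪x - x*, G(x)⟫ ≤ 0` with equality iff `x = x*`. -/
theorem fin_dim_lyapunov
    (xs : EuclideanSpace ℝ (Fin 2)) (ε : ℝ) (hε : 0 < ε)
    (a b : ℝ) (ha : a < 0) (hb : 0 < b)
    (P : ℝ → ℝ) (hP : ∀ s, P s = max a (min b s))
    (M : EuclideanSpace ℝ (Fin 2) → EuclideanSpace ℝ (Fin 2))
    (hM : ∀ x, M x = (ε / Real.sqrt (1 + ‖x - xs‖ ^ 2)) • (x - xs) + Jrot (x - xs))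
    (G : EuclideanSpace ℝ (Fin 2) → EuclideanSpace ℝ (Fin 2))
    (hG : ∀ x, G x = -M x + (WithLp.equiv 2 (Fin 2 → ℝ)).symm ![P (-(x 0 - xs 0)), 0]) :
    ∀ x : EuclideanSpace ℝ (Fin 2),
      ⟪x - xs, G x⟫ ≤ 0 ∧ (⟪x - xs, G x⟫ = 0 ↔ x = xs) := by
  intro x
  have hc : 0 < ε / Real.sqrt (1 + ‖x - xs‖ ^ 2) := by
    apply div_pos hε
    apply Real.sqrt_pos.2
    positivity
  set c := ε / Real.sqrt (1 + ‖x - xs‖ ^ 2) with hcdef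
  set t := x 0 - xs 0 with ht
  set u := x 1 - xs 1 with hu
  have key : ⟪x - xs, G x⟫ = -(c * (t ^ 2 + u ^ 2)) + t * P (-t) := by
    rw [hG, hM]
    simp only [PiLp.inner_apply, Fin.sum_univ_two, RCLike.inner_apply, starRingEnd_apply,
      star_trivial, PiLp.add_apply, PiLp.neg_apply, PiLp.smul_apply, PiLp.sub_apply,
      smul_eq_mul, Jrot, WithLp.equiv_symm_apply, PiLp.toLp_apply, Matrix.cons_val_zero, Matrix.cons_val_one,
      Matrix.head_cons]
    ring
  have hsat : t * P (-t) ≤ 0 := by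
    rw [hP]
    rcases le_total t 0 with h | h
    · have h1 : (0:ℝ) ≤ max a (min b (-t)) :=
        le_max_of_le_right (le_min hb.le (by linarith))
      exact mul_nonpos_of_nonpos_of_nonneg h h1
    · have h1 : max a (min b (-t)) ≤ 0 :=
        max_le ha.le (le_trans (min_le_right _ _) (by linarith))
      exact mul_nonpos_of_nonneg_of_nonpos h h1
  have hq : 0 ≤ c * (t ^ 2 + u ^ 2) := by positivity
  constructor
  · rw [key]; linarith
  constructor
  · intro h0
    rw [key] at h0
    have hsq : t ^ 2 + u ^ 2 = 0 := by
      have : c * (t ^ 2 + u ^ 2) = 0 := by linarith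
      rcases mul_eq_zero.mp this with h | h
      · exact absurd h hc.ne'
      · exact h
    have htz : t = 0 := by nlinarith [sq_nonneg t, sq_nonneg u]
    have huz : u = 0 := by nlinarith [sq_nonneg t, sq_nonneg u]
    have hxy : x - xs = 0 := by
      ext i
      fin_cases i
      · simpa using htz
      · simpa using huz
    exact sub_eq_zero.mp hxy
  · intro h0
    subst h0
    rw [key]
    have htz : t = 0 := by simp [ht]
    have huz : u = 0 := by simp [hu]
    rw [htz, huz, hP]
    simp [min_eq_right hb.le, max_eq_right ha.le]
end

section
/- Let X = ℝ², x* ∈ X, ε > 0, a < 0 < b, J(z₁, z₂) = (z₂, −z₁), M(x) = (ε / √(1 + ‖x − x*‖²))·(x − x*) + J(x − x*), P_{[a,b]}(s) = max(a, min(b, s)), and G(x) = −M(x) + (P_{[a,b]}(−(x₁ − x₁*)), 0). Then the closed-loop system is globally asymptotically stable at x*: every differentiable curve x : [0, ∞) → ℝ² satisfying x'(t) = G(x(t)) for all t ≥ 0 converges to x*, i.e., x(t) → x* as t → ∞. -/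
open Filter

/-- Global asymptotic stability of the saturated closed-loop system: every
solution of `x' = G(x)` converges to `x*`. -/
theorem fin_dim_global_asymptotic_stability
    (xs : EuclideanSpace ℝ (Fin 2)) (ε : ℝ) (hε : 0 < ε)
    (a b : ℝ) (ha : a < 0) (hb : 0 < b)
    (P : ℝ → ℝ) (hP : ∀ s, P s = max a (min b s))
    (M : EuclideanSpace ℝ (Fin 2) → EuclideanSpace ℝ (Fin 2))
    (hM : ∀ x, M x = (ε / Real.sqrt (1 + ‖x - xs‖ ^ 2)) • (x - xs) + Jrot (x - xs))
    (G : EuclideanSpace ℝ (Fin 2) → EuclideanSpace ℝ (Fin 2))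
    (hG : ∀ x, G x = -M x + (WithLp.equiv 2 (Fin 2 → ℝ)).symm ![P (-(x 0 - xs 0)), 0])
    (x : ℝ → EuclideanSpace ℝ (Fin 2))
    (hx : ∀ t : ℝ, 0 ≤ t → HasDerivAt x (G (x t)) t) :
    Tendsto x atTop (nhds xs) := by
  -- the Lyapunov function
  set V : ℝ → ℝ := fun t => ‖x t - xs‖ ^ 2 with hV
  -- key pointwise inner-product estimate
  have key : ∀ p : EuclideanSpace ℝ (Fin 2),
      inner (𝕜 := ℝ) (p - xs) (G p) ≤
        -(ε / Real.sqrt (1 + ‖p - xs‖ ^ 2)) * ‖p - xs‖ ^ 2 := by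
    intro p
    set z : EuclideanSpace ℝ (Fin 2) := p - xs with hz
    have hz0 : z 0 = p 0 - xs 0 := rfl
    have hz1 : z 1 = p 1 - xs 1 := rfl
    have hnorm : ‖z‖ ^ 2 = z 0 ^ 2 + z 1 ^ 2 := by
      rw [EuclideanSpace.norm_eq, Real.sq_sqrt (by positivity)]
      simp [Fin.sum_univ_two, sq]
    have hsat : z 0 * P (-(z 0)) ≤ 0 := by
      rw [hP]
      rcases le_total 0 (z 0) with h | h
      · have h1 : max a (min b (-(z 0))) ≤ 0 :=
          max_le ha.le (le_trans (min_le_right _ _) (by linarith))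
        exact mul_nonpos_of_nonneg_of_nonpos h h1
      · have h1 : 0 ≤ max a (min b (-(z 0))) :=
          le_max_of_le_right (le_min hb.le (by linarith))
        exact mul_nonpos_of_nonpos_of_nonneg h h1
    have hinner : inner (𝕜 := ℝ) z (G p) =
        -(ε / Real.sqrt (1 + ‖z‖ ^ 2)) * ‖z‖ ^ 2 + z 0 * P (-(z 0)) := by
      rw [hG, hM, hnorm]
      simp only [PiLp.inner_apply, RCLike.inner_apply, conj_trivial, Fin.sum_univ_two,
        PiLp.add_apply, PiLp.neg_apply, PiLp.smul_apply, smul_eq_mul, Jrot,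
        WithLp.equiv_symm_apply, PiLp.toLp_apply, Matrix.cons_val_zero, Matrix.cons_val_one, Matrix.head_cons,
        ← hz, hz0]
      ring
    rw [hinner]
    nlinarith [hsat]
  -- derivative of V
  have hVd : ∀ t : ℝ, 0 ≤ t →
      HasDerivAt V (2 * inner (𝕜 := ℝ) (x t - xs) (G (x t))) t := by
    intro t ht
    have hy : HasDerivAt (fun t => x t - xs) (G (x t)) t := (hx t ht).sub_const xs
    have := (hy.inner ℝ hy : HasDerivAt (fun t => inner (𝕜 := ℝ) (x t - xs) (x t - xs))
      (inner (𝕜 := ℝ) (x t - xs) (G (x t)) + inner (𝕜 := ℝ) (G (x t)) (x t - xs)) t)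
    have heq : (fun t => inner (𝕜 := ℝ) (x t - xs) (x t - xs)) = V := by
      funext s; rw [real_inner_self_eq_norm_sq]
    rw [heq] at this
    have e : 2 * inner (𝕜 := ℝ) (x t - xs) (G (x t)) = inner (𝕜 := ℝ) (x t - xs) (G (x t)) + inner (𝕜 := ℝ) (G (x t)) (x t - xs) := by
      rw [real_inner_comm (G (x t)) (x t - xs)]; ring
    rw [e]; exact this
  have hVnonneg : ∀ t, 0 ≤ V t := fun t => sq_nonneg _
  -- Gronwall setup
  have gron : ∀ K : ℝ, (∀ t : ℝ, 0 ≤ t →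
      2 * inner (𝕜 := ℝ) (x t - xs) (G (x t)) ≤ K * V t) →
      ∀ t : ℝ, 0 ≤ t → V t ≤ V 0 * Real.exp (K * t) := by
    intro K hK t ht
    have H := le_gronwallBound_of_liminf_deriv_right_le
      (f := V) (f' := fun t => 2 * inner (𝕜 := ℝ) (x t - xs) (G (x t)))
      (δ := V 0) (K := K) (ε := 0) (a := 0) (b := t)
      (fun s hs => ((hVd s hs.1).continuousAt).continuousWithinAt)
      (fun s hs r hr => by
        have := ((hVd s hs.1).hasDerivWithinAt (s := Set.Ici s)).liminf_right_slope_le hr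
        refine this.mono fun z hz => ?_
        rwa [slope_def_field, div_eq_inv_mul] at hz)
      le_rfl
      (fun s hs => by simpa using hK s hs.1)
      t ⟨ht, le_rfl⟩
    simpa [gronwallBound_ε0] using H
  -- Step 1: V is bounded by V 0
  have hmono : ∀ t : ℝ, 0 ≤ t → V t ≤ V 0 := by
    intro t ht
    have h0 : ∀ s : ℝ, 0 ≤ s →
        2 * inner (𝕜 := ℝ) (x s - xs) (G (x s)) ≤ 0 * V s := by
      intro s hs
      rw [zero_mul]
      have h1 := key (x s)
      have hpos : 0 ≤ (ε / Real.sqrt (1 + ‖x s - xs‖ ^ 2)) * ‖x s - xs‖ ^ 2 := by positivity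
      linarith
    have := gron 0 h0 t ht
    simpa using this
  -- Step 2: exponential decay
  set C : ℝ := Real.sqrt (1 + V 0) with hC
  have hCpos : 0 < C := Real.sqrt_pos.2 (by nlinarith [hVnonneg 0])
  set K : ℝ := -(2 * ε / C) with hK
  have hKneg : K < 0 := by
    have : 0 < 2 * ε / C := by positivity
    rw [hK]; linarith
  have hdecay : ∀ t : ℝ, 0 ≤ t → V t ≤ V 0 * Real.exp (K * t) := by
    apply gron
    intro s hs
    have h1 := key (x s)
    have hroot : Real.sqrt (1 + ‖x s - xs‖ ^ 2) ≤ C := by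
      apply Real.sqrt_le_sqrt
      have := hmono s hs
      simp only [hV] at this ⊢
      linarith
    have hrootpos : 0 < Real.sqrt (1 + ‖x s - xs‖ ^ 2) := Real.sqrt_pos.2 (by positivity)
    have hdiv : ε / C ≤ ε / Real.sqrt (1 + ‖x s - xs‖ ^ 2) :=
      div_le_div_of_nonneg_left hε.le hrootpos hroot
    have hVs : V s = ‖x s - xs‖ ^ 2 := rfl
    rw [hK, hVs]
    have h2 := mul_le_mul_of_nonneg_right hdiv (sq_nonneg ‖x s - xs‖)
    have h3 : -(2 * ε / C) * ‖x s - xs‖ ^ 2 = -2 * (ε / C * ‖x s - xs‖ ^ 2) := by ring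
    have h4 : -(ε / Real.sqrt (1 + ‖x s - xs‖ ^ 2)) * ‖x s - xs‖ ^ 2
        = -(ε / Real.sqrt (1 + ‖x s - xs‖ ^ 2) * ‖x s - xs‖ ^ 2) := by ring
    linarith
  -- Step 3: conclude
  have hVlim : Tendsto V atTop (nhds 0) := by
    have hub : Tendsto (fun t => V 0 * Real.exp (K * t)) atTop (nhds 0) := by
      have h1 : Tendsto (fun t : ℝ => K * t) atTop atBot := by
        simpa using tendsto_id.const_mul_atTop_of_neg hKneg
      have h2 : Tendsto (fun t : ℝ => Real.exp (K * t)) atTop (nhds 0) :=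
        Real.tendsto_exp_atBot.comp h1
      have h3 := h2.const_mul (V 0)
      rw [mul_zero] at h3
      exact h3
    refine tendsto_of_tendsto_of_tendsto_of_le_of_le' tendsto_const_nhds hub ?_ ?_
    · exact Eventually.of_forall hVnonneg
    · filter_upwards [eventually_ge_atTop (0 : ℝ)] with t ht using hdecay t ht
  have hnormlim : Tendsto (fun t => ‖x t - xs‖) atTop (nhds 0) := by
    have h1 := (Real.continuous_sqrt.tendsto 0).comp hVlim
    have h2 : (fun t => Real.sqrt (V t)) = fun t => ‖x t - xs‖ := by
      funext t; exact Real.sqrt_sq (norm_nonneg _)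
    rw [show Real.sqrt 0 = 0 from Real.sqrt_zero] at h1
    simpa [Function.comp_def, h2] using h1
  have := tendsto_iff_norm_sub_tendsto_zero.mpr hnormlim
  exact this
end
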